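/- arXiv:1805.00648 — 2 statements merged into one kernel-verified Lean document; each statement's English description precedes it below -/
import Mathlib

section
/- Suppose d ≥ 3 divides g-1. Then for each 1 ≤ i ≤ d-2, the rank r_i = (i(d-2-i)/(d-1))·C(d,i+1) of the i-th syzygy bundle divides its degree deg N_i = (d-2-i)(g+d-1)·C(d-2,i-1). -/
/-- If `d ≥ 3` divides `g - 1`, then for each `1 ≤ i ≤ d-2` the rank
`r_i = (i(d-2-i)/(d-1))·C(d,i+1)` of the `i`-th syzygy bundle divides its degree
`deg N_i = (d-2-i)(g+d-1)·C(d-2,i-1)`. -/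
theorem rank_divides_degree (d g i : ℕ) (hd : 3 ≤ d) (hg : 2 ≤ g) (hdvd : d ∣ g - 1)
    (hi1 : 1 ≤ i) (hi2 : i ≤ d - 2) :
    ∃ q : ℤ, (((d - 2 - i) * (g + d - 1) * ((d - 2).choose (i - 1)) : ℕ) : ℚ)
      = (q : ℚ) * (((i : ℚ) * ((d : ℚ) - 2 - i) / ((d : ℚ) - 1)) * (d.choose (i + 1))) := by
  obtain ⟨k, hk⟩ := hdvd
  have hg1 : g = d * k + 1 := by omega
  subst hg1
  refine ⟨((i + 1) * (k + 1) : ℕ), ?_⟩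
  have hc1 : (i + 1) * Nat.choose d (i + 1) = d * Nat.choose (d - 1) i := by
    have h := Nat.add_one_mul_choose_eq (d - 1) i
    rw [show d - 1 + 1 = d by omega] at h
    rw [h]; ring
  have hc2 : i * Nat.choose (d - 1) i = (d - 1) * Nat.choose (d - 2) (i - 1) := by
    have h := Nat.add_one_mul_choose_eq (d - 2) (i - 1)
    rw [show d - 2 + 1 = d - 1 by omega, show i - 1 + 1 = i by omega] at h
    rw [h]; ring
  have hc3 : i * ((i + 1) * Nat.choose d (i + 1))
      = d * ((d - 1) * Nat.choose (d - 2) (i - 1)) := by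
    rw [hc1, ← mul_assoc, mul_comm i d, mul_assoc, hc2]
  have hkey : (i : ℚ) * ((i : ℚ) + 1) * (Nat.choose d (i + 1) : ℚ)
      = (d : ℚ) * ((d : ℚ) - 1) * (Nat.choose (d - 2) (i - 1) : ℚ) := by
    have h := congrArg (Nat.cast : ℕ → ℚ) hc3
    push_cast [Nat.cast_sub (show 1 ≤ d by omega)] at h
    linarith
  have hsub1 : (((d - 2 - i : ℕ)) : ℚ) = (d : ℚ) - 2 - i := by
    push_cast [Nat.cast_sub (show i ≤ d - 2 by omega), Nat.cast_sub (show 2 ≤ d by omega)]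
    ring
  have hsub2 : (d * k + 1 + d - 1 : ℕ) = d * (k + 1) := by rw [Nat.mul_add, Nat.mul_one]; omega
  rw [hsub2]
  push_cast [hsub1]
  have hd1 : (d : ℚ) - 1 ≠ 0 := by
    have : (3 : ℚ) ≤ (d : ℚ) := by exact_mod_cast hd
    linarith
  field_simp
  linear_combination (-1 : ℚ) * ((d : ℚ) - 2 - i) * hkey
end

section
/- Let d ≥ 4 and 1 ≤ i ≤ d-3. In the free Q-module with basis {ζ, κ, δ}, substituting the relations p_* c_1(E)² = (b/2)ζ, p_* ch_2(E) = κ/12 + ζ/2 + δ/12, and π_* c_1(ω_α)² = κ + 4ζ (with b = 2g+2d-2) into the Bogomolov expression p_*(c_1(N_i)² - 2·rk(N_i)·ch_2(N_i)), where c_1(N_i) = (d-2-i)·C(d-2,i-1)·c_1(E), rk(N_i) = (i(d-2-i)/(d-1))·C(d,i+1), and ch_2(N_i) = C(d-4,i-1)·(d·ch_2(E) + ((d-4)i+2)/(2(d-i-1))·c_1(E)² - c_1(ω_α)²), yields A_i·(6(gd-6g+d+6)·ζ - d(d-12)·κ - d²·δ), where A_i = C(d-4,i-1)²·(d-2)(d-3)/(6(i+1)(d-i-1)).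 -/
set_option maxHeartbeats 4000000 in
/-- Formal verification of the main divisor-class computation: substituting the relations
`p_*c₁(E)² = (b/2)ζ`, `p_*ch₂(E) = κ/12 + ζ/2 + δ/12`, `π_*c₁(ω_α)² = κ + 4ζ`
(with `b = 2g+2d-2`) into the Bogomolov expression
`p_*(c₁(N_i)² - 2·rk(N_i)·ch₂(N_i))` yields
`A_i·(6(gd-6g+d+6)·ζ - d(d-12)·κ - d²·δ)`. -/
theorem main_divisor_class (V : Type*) [AddCommGroup V] [Module ℚ V]
    (ζ κ δ : V) (d g i : ℕ) (hd : 4 ≤ d) (hg : 2 ≤ g) (hi1 : 1 ≤ i) (hi2 : i ≤ d - 3) :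
    let D : ℚ := d
    let G : ℚ := g
    let I : ℚ := i
    let b : ℚ := 2 * G + 2 * D - 2
    let Pc1sq : V := (b / 2) • ζ                                   -- p_* c₁(E)²
    let Pch2 : V := (1 / 12 : ℚ) • κ + (1 / 2 : ℚ) • ζ + (1 / 12 : ℚ) • δ  -- p_* ch₂(E)
    let Pω : V := κ + (4 : ℚ) • ζ                                  -- π_* c₁(ω_α)²
    let c1coef : ℚ := (D - 2 - I) * ((d - 2).choose (i - 1))        -- c₁(N_i) = c1coef·c₁(E)
    let rk : ℚ := I * (D - 2 - I) / (D - 1) * (d.choose (i + 1))    -- rk(N_i)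
    let A : ℚ := (((d - 4).choose (i - 1) : ℚ)) ^ 2 * (D - 2) * (D - 3)
        / (6 * (I + 1) * (D - I - 1))
    (c1coef ^ 2) • Pc1sq
        - (2 * rk) • ((((d - 4).choose (i - 1) : ℚ)) • (D • Pch2
            + (((D - 4) * I + 2) / (2 * (D - I - 1))) • Pc1sq - Pω))
      = A • ((6 * (G * D - 6 * G + D + 6)) • ζ - (D * (D - 12)) • κ - (D ^ 2) • δ) := by
  obtain ⟨i', rfl⟩ : ∃ i', i = i' + 1 := ⟨i - 1, by omega⟩
  obtain ⟨m, rfl⟩ : ∃ m, d = i' + m + 4 := ⟨d - i' - 4, by omega⟩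
  intro D G I b Pc1sq Pch2 Pω c1coef rk A
  have h1 : i' + m + 4 - 4 = i' + m := by omega
  have h2 : i' + m + 4 - 2 = i' + m + 2 := by omega
  have h3 : i' + 1 - 1 = i' := by omega
  set x : ℚ := ((i' + m).choose i' : ℚ) with hx
  have hfi : (i'.factorial : ℚ) ≠ 0 := by positivity
  have hfm : (m.factorial : ℚ) ≠ 0 := by positivity
  have hm1 : ((m : ℚ) + 1) ≠ 0 := by positivity
  have hm2 : ((m : ℚ) + 2) ≠ 0 := by positivity
  have hi1' : ((i' : ℚ) + 1) ≠ 0 := by positivity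
  have hi2' : ((i' : ℚ) + 2) ≠ 0 := by positivity
  have hD1 : ((i' : ℚ) + (m : ℚ) + 3) ≠ 0 := by positivity
  have c0 : x = ((i'+m).factorial : ℚ) / ((i'.factorial : ℚ) * (m.factorial : ℚ)) := by
    rw [hx, Nat.cast_choose ℚ (by omega : i' ≤ i' + m)]
    have h : i' + m - i' = m := by omega
    rw [h]
  have e2 : ((m+2).factorial : ℚ) = ((m : ℚ) + 2) * ((m : ℚ) + 1) * (m.factorial : ℚ) := by
    show (((m+1)+1).factorial : ℚ) = _
    rw [Nat.factorial_succ, Nat.factorial_succ]; push_cast; ring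
  have c1 : (((i' + m + 2).choose i' : ℕ) : ℚ)
      = ((i' : ℚ) + (m : ℚ) + 2) * ((i' : ℚ) + (m : ℚ) + 1) / (((m : ℚ) + 2) * ((m : ℚ) + 1)) * x := by
    rw [Nat.cast_choose ℚ (by omega : i' ≤ i' + m + 2)]
    have h : i' + m + 2 - i' = m + 2 := by omega
    rw [h, e2, c0]
    have e1 : ((i' + m + 2).factorial : ℚ)
        = ((i' : ℚ) + (m : ℚ) + 2) * ((i' : ℚ) + (m : ℚ) + 1) * ((i'+m).factorial : ℚ) := by
      show (((i'+m+1)+1).factorial : ℚ) = _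
      rw [Nat.factorial_succ, Nat.factorial_succ]; push_cast; ring
    rw [e1]
    field_simp
  have c2 : (((i' + m + 4).choose (i' + 1 + 1) : ℕ) : ℚ)
      = ((i' : ℚ) + (m : ℚ) + 4) * ((i' : ℚ) + (m : ℚ) + 3) * ((i' : ℚ) + (m : ℚ) + 2)
          * ((i' : ℚ) + (m : ℚ) + 1)
        / (((i' : ℚ) + 2) * ((i' : ℚ) + 1) * (((m : ℚ) + 2) * ((m : ℚ) + 1))) * x := by
    rw [Nat.cast_choose ℚ (by omega : i' + 1 + 1 ≤ i' + m + 4)]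
    have h : i' + m + 4 - (i' + 1 + 1) = m + 2 := by omega
    rw [h, e2, c0]
    have e1 : ((i' + m + 4).factorial : ℚ)
        = ((i' : ℚ) + (m : ℚ) + 4) * ((i' : ℚ) + (m : ℚ) + 3) * ((i' : ℚ) + (m : ℚ) + 2)
          * ((i' : ℚ) + (m : ℚ) + 1) * ((i'+m).factorial : ℚ) := by
      show (((i'+m+1+1+1)+1).factorial : ℚ) = _
      rw [Nat.factorial_succ, Nat.factorial_succ, Nat.factorial_succ, Nat.factorial_succ]
      push_cast; ring
    have e3 : (((i'+1+1)).factorial : ℚ) = ((i' : ℚ) + 2) * ((i' : ℚ) + 1) * (i'.factorial : ℚ) := by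
      rw [Nat.factorial_succ, Nat.factorial_succ]; push_cast; ring
    rw [e1, e3]
    field_simp
  simp only [D, G, I, b, Pc1sq, Pch2, Pω, c1coef, rk, A, h1, h2, h3]
  rw [← hx, c1, c2]
  push_cast
  have r1 : ((i' : ℚ) + (m : ℚ) + 4) - ((i' : ℚ) + 1) - 1 = (m : ℚ) + 2 := by ring
  have r2 : ((i' : ℚ) + (m : ℚ) + 4) - 1 = (i' : ℚ) + (m : ℚ) + 3 := by ring
  have r3 : ((i' : ℚ) + 1) + 1 = (i' : ℚ) + 2 := by ring
  rw [r1, r2, r3]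
  match_scalars <;>
  · field_simp
    ring
end
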